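/- For $z_1, z_2$ with $0 < |z_1|, |z_2| \leq e^{-1}$, the inequality $\frac{4}{\pi} h_{\mathbb{D}^*}(z_1, z_2) \leq D(z_1, z_2)$ holds, where $h_{\mathbb{D}^*}$ is the hyperbolic distance of the punctured unit disk $\mathbb{D}^* = \{0 < |z| < 1\}$ with density $\lambda_{\mathbb{D}^*}(z) = \frac{1}{2|z|\log(1/|z|)}$, and $D(z_1,z_2) = \frac{2\sin(\theta/2)}{\max\{\log(1/|z_1|),\log(1/|z_2|)\}} + |\log\log(1/|z_2|) - \log\log(1/|z_1|)|$ with $\theta = |\arg(z_2/z_1)| \in [0,\pi]$. -/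

import Mathlib

open Real

/-- The inverse hyperbolic tangent, `arth t = (1/2) log ((1+t)/(1-t))`. -/
noncomputable def arth (t : ℝ) : ℝ := Real.log ((1 + t) / (1 - t)) / 2

/-- The hyperbolic distance of the punctured unit disk `𝔻* = {0 < |z| < 1}`
(with density `λ(z) = 1/(2|z| log(1/|z|))`), computed via the covering
`ζ ↦ exp (π i ζ)`:  `h(z₁,z₂) = arth √((θ² + (τ₁-τ₂)²)/(θ² + (τ₁+τ₂)²))`
where `τⱼ = log (1/|zⱼ|)` and `θ = |arg (z₂/z₁)| ∈ [0,π]`. -/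
noncomputable def hDstar (z₁ z₂ : ℂ) : ℝ :=
  arth (Real.sqrt
    ((|Complex.arg (z₂ / z₁)| ^ 2 +
        (Real.log (1 / ‖z₁‖) - Real.log (1 / ‖z₂‖)) ^ 2) /
      (|Complex.arg (z₂ / z₁)| ^ 2 +
        (Real.log (1 / ‖z₁‖) + Real.log (1 / ‖z₂‖)) ^ 2)))

/-- The distance function `D` on the punctured disk `0 < |z| ≤ e⁻¹`. -/
noncomputable def D (z₁ z₂ : ℂ) : ℝ :=
  2 * Real.sin (|Complex.arg (z₂ / z₁)| / 2) /
      max (Real.log (1 / ‖z₁‖)) (Real.log (1 / ‖z₂‖)) +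
    |Real.log (Real.log (1 / ‖z₂‖)) - Real.log (Real.log (1 / ‖z₁‖))|

/-! Under the covering `ζ ↦ exp (i ζ)` of `𝔻*` by the upper half-plane, `zⱼ` lifts to
`arg zⱼ + i τⱼ`, and since `tanh (d / 2) = |z - w| / |z - w̄|` for the metric `d` of `ℍ`, `h_{𝔻*}` is
half the distance in `ℍ` between `θ + i τ₁` and `i τ₂`. Bound that distance by the path that rises
vertically to height `max τ₁ τ₂`, runs horizontally and descends again: the vertical legs cost
`|log τ₂ - log τ₁|` together, the horizontal one at most `θ / max τ₁ τ₂`. Jordan's inequality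
`θ / π ≤ sin (θ / 2)` and `2 / π ≤ 1` then give `D`. -/

open UpperHalfPlane

theorem arth_tanh (x : ℝ) : arth (tanh x) = x := by
  have h := artanh_eq_half_log ⟨(neg_one_lt_tanh x).le, (tanh_lt_one x).le⟩
  rw [artanh_tanh] at h
  rw [arth]
  linarith

namespace UpperHalfPlane

variable (a b : ℝ) {x y : ℝ} (hx : 0 < x) (hy : 0 < y)

theorem tanh_half_dist_mk :
    tanh (dist (mk ⟨a, x⟩ hx) (mk ⟨b, y⟩ hy) / 2) =
      √(((a - b) ^ 2 + (x - y) ^ 2) / ((a - b) ^ 2 + (x + y) ^ 2)) := by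
  rw [tanh_half_dist, sqrt_div' _ (by positivity)]
  simp only [Complex.dist_eq, Complex.norm_def, Complex.normSq_apply, Complex.sub_re,
    Complex.sub_im, Complex.conj_re, Complex.conj_im]
  ring_nf

theorem half_dist_mk_eq_arth :
    dist (mk ⟨a, x⟩ hx) (mk ⟨b, y⟩ hy) / 2 =
      arth √(((a - b) ^ 2 + (x - y) ^ 2) / ((a - b) ^ 2 + (x + y) ^ 2)) := by
  rw [← tanh_half_dist_mk, arth_tanh]

theorem dist_mk_mk_of_re_eq : dist (mk ⟨a, x⟩ hx) (mk ⟨a, y⟩ hy) = |log x - log y| :=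
  dist_of_re_eq rfl

theorem dist_mk_mk_of_im_eq_le : dist (mk ⟨a, y⟩ hy) (mk ⟨b, y⟩ hy) ≤ |a - b| / y := by
  have horizontal : dist (⟨a, y⟩ : ℂ) ⟨b, y⟩ = |a - b| := Complex.dist_of_im_eq rfl
  simpa [horizontal, sqrt_mul_self hy.le] using
    dist_le_dist_coe_div_sqrt (mk ⟨a, y⟩ hy) (mk ⟨b, y⟩ hy)

theorem dist_mk_le :
    dist (mk ⟨a, x⟩ hx) (mk ⟨b, y⟩ hy) ≤ |log y - log x| + |a - b| / max x y := by
  have hm : 0 < max x y := lt_max_of_lt_left hx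
  calc dist (mk ⟨a, x⟩ hx) (mk ⟨b, y⟩ hy)
      ≤ dist (mk ⟨a, x⟩ hx) (mk ⟨a, max x y⟩ hm) + dist (mk ⟨a, max x y⟩ hm) (mk ⟨b, max x y⟩ hm)
          + dist (mk ⟨b, max x y⟩ hm) (mk ⟨b, y⟩ hy) := dist_triangle4 _ _ _ _
    _ ≤ |log x - log (max x y)| + |a - b| / max x y + |log (max x y) - log y| := by
      rw [dist_mk_mk_of_re_eq, dist_mk_mk_of_re_eq]
      gcongr
      exact dist_mk_mk_of_im_eq_le a b hm
    _ = |log y - log x| + |a - b| / max x y := by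
      rcases le_total x y with h | h
      · simp only [max_eq_right h, sub_self, abs_zero, add_zero, abs_sub_comm]
      · simp only [max_eq_left h, sub_self, abs_zero, zero_add, abs_sub_comm (log x)]
        ring

end UpperHalfPlane

theorem div_pi_le_sin_half {θ : ℝ} (h₀ : 0 ≤ θ) (hπ : θ ≤ π) : θ / π ≤ sin (θ / 2) := by
  have := mul_le_sin (x := θ / 2) (by linarith) (by linarith)
  calc θ / π = 2 / π * (θ / 2) := by field_simp
  _ ≤ sin (θ / 2) := this

theorem hDstar_eq_half_dist {z₁ z₂ : ℂ} (hτ₁ : 0 < log (1 / ‖z₁‖)) (hτ₂ : 0 < log (1 / ‖z₂‖)) :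
    hDstar z₁ z₂ =
      dist (mk ⟨|Complex.arg (z₂ / z₁)|, log (1 / ‖z₁‖)⟩ hτ₁) (mk ⟨0, log (1 / ‖z₂‖)⟩ hτ₂) / 2 := by
  rw [half_dist_mk_eq_arth, sub_zero, hDstar]

theorem stmt_10 (z₁ z₂ : ℂ) (h₁ : 0 < ‖z₁‖) (h₁' : ‖z₁‖ ≤ Real.exp (-1))
    (h₂ : 0 < ‖z₂‖) (h₂' : ‖z₂‖ ≤ Real.exp (-1)) :
    4 / π * hDstar z₁ z₂ ≤ D z₁ z₂ := by
  have log_one_div_pos {z : ℂ} (h : 0 < ‖z‖) (h' : ‖z‖ ≤ exp (-1)) : 0 < log (1 / ‖z‖) :=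
    log_pos (one_lt_one_div h (h'.trans_lt (exp_lt_one_iff.2 (by norm_num))))
  have hτ₁ := log_one_div_pos h₁ h₁'
  have hτ₂ := log_one_div_pos h₂ h₂'
  set θ := |Complex.arg (z₂ / z₁)|
  set τ₁ := log (1 / ‖z₁‖)
  set τ₂ := log (1 / ‖z₂‖)
  have hθ : θ ≤ π := Complex.abs_arg_le_pi _
  calc 4 / π * hDstar z₁ z₂ = 2 / π * dist (mk ⟨θ, τ₁⟩ hτ₁) (mk ⟨0, τ₂⟩ hτ₂) := by
        rw [hDstar_eq_half_dist hτ₁ hτ₂]; ring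
    _ ≤ 2 / π * (|log τ₂ - log τ₁| + θ / max τ₁ τ₂) := by
        gcongr
        simpa [θ] using dist_mk_le θ 0 hτ₁ hτ₂
    _ = 2 / π * |log τ₂ - log τ₁| + 2 / max τ₁ τ₂ * (θ / π) := by ring
    _ ≤ 1 * |log τ₂ - log τ₁| + 2 / max τ₁ τ₂ * sin (θ / 2) := by
        gcongr
        · rw [div_le_one pi_pos]; linarith [pi_gt_three]
        · exact div_pi_le_sin_half (abs_nonneg _) hθ
    _ = D z₁ z₂ := by rw [D]; ring
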